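/- If a graph G of order n has a perfect matching and ν(G) ≥ γ_h(G), then γ_{rh}(G) ≤ 2n·(ln(δ_h + 1) + 1)/(δ_h + 1). -/

import Mathlib

open Finset

noncomputable section
open scoped Classical

variable {n : ℕ}

/-- The set of vertices at distance exactly 2 from `i`. -/
def N2 (G : SimpleGraph (Fin n)) (i : Fin n) : Finset (Fin n) :=
  Finset.univ.filter (fun j => G.dist i j = 2)

/-- The neighborhood of `i`. -/
def Nbr (G : SimpleGraph (Fin n)) (i : Fin n) : Finset (Fin n) :=
  Finset.univ.filter (fun j => G.Adj i j)

/-- Hop degree of a vertex. -/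
def hopDeg (G : SimpleGraph (Fin n)) (i : Fin n) : ℕ := (N2 G i).card

/-- Minimum hop degree. -/
def minHopDeg (G : SimpleGraph (Fin n)) : ℕ := ⨅ i, hopDeg G i

/-- Minimum degree. -/
def minDeg (G : SimpleGraph (Fin n)) : ℕ := ⨅ i, (Nbr G i).card

def IsHopDomSet (G : SimpleGraph (Fin n)) (S : Finset (Fin n)) : Prop :=
  ∀ u, u ∉ S → ∃ v ∈ S, G.dist u v = 2

def IsTwoStepDomSet (G : SimpleGraph (Fin n)) (S : Finset (Fin n)) : Prop :=
  ∀ u : Fin n, ∃ v ∈ S, G.dist u v = 2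

def IsRestrainedHopDomSet (G : SimpleGraph (Fin n)) (S : Finset (Fin n)) : Prop :=
  IsHopDomSet G S ∧ ∀ u, u ∉ S → ∃ v, v ∉ S ∧ G.Adj u v

def IsTotalRestrainedHopDomSet (G : SimpleGraph (Fin n)) (S : Finset (Fin n)) : Prop :=
  IsTwoStepDomSet G S ∧ ∀ u, u ∉ S → ∃ v, v ∉ S ∧ G.Adj u v

def IsTwoStepRestrainedDomSet (G : SimpleGraph (Fin n)) (S : Finset (Fin n)) : Prop :=
  IsHopDomSet G S ∧ ∀ u, u ∉ S → ∃ v, v ∉ S ∧ G.dist u v = 2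

def IsTotalTwoStepRestrainedDomSet (G : SimpleGraph (Fin n)) (S : Finset (Fin n)) : Prop :=
  IsTwoStepDomSet G S ∧ ∀ u, u ∉ S → ∃ v, v ∉ S ∧ G.dist u v = 2

def hopDomNum (G : SimpleGraph (Fin n)) : ℕ :=
  sInf {k | ∃ S : Finset (Fin n), IsHopDomSet G S ∧ S.card = k}

def twoStepDomNum (G : SimpleGraph (Fin n)) : ℕ :=
  sInf {k | ∃ S : Finset (Fin n), IsTwoStepDomSet G S ∧ S.card = k}

def rhDomNum (G : SimpleGraph (Fin n)) : ℕ :=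
  sInf {k | ∃ S : Finset (Fin n), IsRestrainedHopDomSet G S ∧ S.card = k}

def trhDomNum (G : SimpleGraph (Fin n)) : ℕ :=
  sInf {k | ∃ S : Finset (Fin n), IsTotalRestrainedHopDomSet G S ∧ S.card = k}

def tsrDomNum (G : SimpleGraph (Fin n)) : ℕ :=
  sInf {k | ∃ S : Finset (Fin n), IsTwoStepRestrainedDomSet G S ∧ S.card = k}

def ttsrDomNum (G : SimpleGraph (Fin n)) : ℕ :=
  sInf {k | ∃ S : Finset (Fin n), IsTotalTwoStepRestrainedDomSet G S ∧ S.card = k}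

/-- The graph `Dist(G;2)` joining vertices at distance exactly 2 in `G`. -/
def dist2Graph (G : SimpleGraph (Fin n)) : SimpleGraph (Fin n) where
  Adj u v := u ≠ v ∧ G.dist u v = 2
  symm := by
    constructor
    intro u v h
    exact ⟨h.1.symm, by rw [SimpleGraph.dist_comm]; exact h.2⟩
  loopless := ⟨fun v h => h.1 rfl⟩

def domNum (H : SimpleGraph (Fin n)) : ℕ :=
  sInf {k | ∃ S : Finset (Fin n), (∀ u, u ∉ S → ∃ v ∈ S, H.Adj u v) ∧ S.card = k}

def totalDomNum (H : SimpleGraph (Fin n)) : ℕ :=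
  sInf {k | ∃ S : Finset (Fin n), (∀ u : Fin n, ∃ v ∈ S, H.Adj u v) ∧ S.card = k}

/-- Matching number: maximum number of edges in a matching. -/
def matchingNum (G : SimpleGraph (Fin n)) : ℕ :=
  sSup {k | ∃ M : SimpleGraph.Subgraph G, M.IsMatching ∧ M.edgeSet.ncard = k}

/-- A hop matching: a set of paths of length two, no two of which share an end vertex. -/
def IsHopMatching (G : SimpleGraph (Fin n)) (H : Finset (Fin n × Fin n × Fin n)) : Prop :=
  (∀ t ∈ H, G.Adj t.1 t.2.1 ∧ G.Adj t.2.1 t.2.2 ∧ t.1 ≠ t.2.2) ∧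
  ∀ t ∈ H, ∀ t' ∈ H, t ≠ t' →
    t.1 ≠ t'.1 ∧ t.1 ≠ t'.2.2 ∧ t.2.2 ≠ t'.1 ∧ t.2.2 ≠ t'.2.2

/-- Hop matching number. -/
def hopMatchingNum (G : SimpleGraph (Fin n)) : ℕ :=
  sSup {k | ∃ H : Finset (Fin n × Fin n × Fin n), IsHopMatching G H ∧ H.card = k}

def frh (G : SimpleGraph (Fin n)) (p : Fin n → ℝ) : ℝ :=
  (∑ i, p i) + (∑ i, (1 - p i) * ∏ j ∈ N2 G i, (1 - p j)) +
  ∑ i, (1 - p i) * (1 - (1 - p i) * ∏ j ∈ N2 G i, (1 - p j)) *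
    ∏ j ∈ Nbr G i, (p j + (1 - p j) * ∏ k ∈ N2 G j, (1 - p k))

def f2sr (G : SimpleGraph (Fin n)) (p : Fin n → ℝ) : ℝ :=
  (∑ i, p i) + (∑ i, (1 - p i) * ∏ j ∈ N2 G i, (1 - p j)) +
  ∑ i, (1 - p i) * (1 - (1 - p i) * ∏ j ∈ N2 G i, (1 - p j)) *
    ∏ j ∈ N2 G i, (p j + (1 - p j) * ∏ k ∈ N2 G j, (1 - p k))

def ZSet (G : SimpleGraph (Fin n)) (X : Finset (Fin n)) : Finset (Fin n) :=
  Finset.univ.filter (fun i => i ∉ X ∧ N2 G i ∩ X = ∅)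

def YSet (G : SimpleGraph (Fin n)) (X : Finset (Fin n)) : Finset (Fin n) :=
  Finset.univ.filter (fun i => i ∉ X ∪ ZSet G X ∧ Nbr G i ⊆ X ∪ ZSet G X)

def DSet (G : SimpleGraph (Fin n)) (X : Finset (Fin n)) : Finset (Fin n) :=
  X ∪ ZSet G X ∪ YSet G X

/-!
Choose a random set `X` containing each vertex independently with probability
`p = log (δ_h + 1) / (δ_h + 1)`, and let `Z = ZSet G X` be the vertices outside `X` with no hop
neighbour in `X`. Then `X ∪ Z` is hop dominating, and its expected size is at most
`n p + n (1 - p) ^ (δ_h + 1) ≤ n p + n e ^ (-p (δ_h + 1))`, which equals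
`n (log (δ_h + 1) + 1) / (δ_h + 1)`.
Adding the partners of `X ∪ Z` in a perfect matching at most doubles the set and makes it
restrained, since the partner of a vertex outside the enlarged set lies outside it as well.
-/

section Averaging

variable {α : Type*} [Fintype α]

theorem Finset.exists_le_sum_mul_of_sum_eq_one {ι : Type*} {s : Finset ι} {w X : ι → ℝ}
    (hw : ∀ i ∈ s, 0 ≤ w i) (hw1 : ∑ i ∈ s, w i = 1) :
    ∃ i ∈ s, X i ≤ ∑ i ∈ s, w i * X i := by
  by_contra! h
  obtain ⟨j, hj, hwj⟩ : ∃ j ∈ s, 0 < w j := by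
    by_contra! h'
    have : ∑ i ∈ s, w i ≤ 0 := Finset.sum_nonpos h'
    linarith
  have hlt : ∑ i ∈ s, w i * ∑ i ∈ s, w i * X i < ∑ i ∈ s, w i * X i :=
    Finset.sum_lt_sum (fun i hi => mul_le_mul_of_nonneg_left (h i hi).le (hw i hi))
      ⟨j, hj, mul_lt_mul_of_pos_left (h j hj) hwj⟩
  rw [← Finset.sum_mul, hw1, one_mul] at hlt
  exact lt_irrefl _ hlt

/-- The probability of the outcome `s` when each element of `α` is chosen independently with
probability `p`. -/
def bernoulliWeight (p : ℝ) (s : Finset α) : ℝ :=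
  p ^ s.card * (1 - p) ^ (Fintype.card α - s.card)

theorem bernoulliWeight_nonneg {p : ℝ} (hp0 : 0 ≤ p) (hp1 : p ≤ 1) (s : Finset α) :
    0 ≤ bernoulliWeight p s :=
  mul_nonneg (pow_nonneg hp0 _) (pow_nonneg (sub_nonneg.2 hp1) _)

theorem sum_bernoulliWeight (p : ℝ) : ∑ s : Finset α, bernoulliWeight p s = 1 := by
  simp [bernoulliWeight, Fintype.sum_pow_mul_eq_add_pow]

theorem sum_bernoulliWeight_disjoint [DecidableEq α] (p : ℝ) (A : Finset α) :
    ∑ s : Finset α, (if Disjoint s A then bernoulliWeight p s else 0) = (1 - p) ^ A.card := by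
  rw [← Finset.sum_filter]
  have hfilter : (univ : Finset (Finset α)).filter (Disjoint · A) = Aᶜ.powerset := by
    ext s
    simp [Finset.subset_compl_iff_disjoint_right]
  have hweight : ∀ s ∈ Aᶜ.powerset,
      bernoulliWeight p s = (1 - p) ^ A.card * (p ^ s.card * (1 - p) ^ (Aᶜ.card - s.card)) := by
    intro s hs
    have hsA : s.card ≤ Aᶜ.card := Finset.card_le_card (Finset.mem_powerset.1 hs)
    have hcard : Fintype.card α - s.card = A.card + (Aᶜ.card - s.card) := by
      rw [Finset.card_compl] at hsA ⊢
      have := A.card_le_univ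
      omega
    rw [bernoulliWeight, hcard, pow_add]
    ring
  rw [hfilter, Finset.sum_congr rfl hweight, ← Finset.mul_sum, Finset.sum_pow_mul_eq_add_pow]
  simp

theorem sum_bernoulliWeight_mul_card [DecidableEq α] (p : ℝ) :
    ∑ s : Finset α, bernoulliWeight p s * s.card = Fintype.card α * p := by
  have hcard : ∀ s : Finset α,
      (s.card : ℝ) = ∑ i : α, (1 - if Disjoint s {i} then 1 else 0) := by
    intro s
    have hindicator : ∀ i,
        (1 - if Disjoint s {i} then (1 : ℝ) else 0) = if i ∈ s then 1 else 0 := by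
      intro i
      by_cases hi : i ∈ s <;> simp [hi]
    rw [Finset.sum_congr rfl fun i _ => hindicator i, Finset.sum_boole]
    simp
  simp_rw [hcard, Finset.mul_sum, mul_sub, mul_one, mul_ite, mul_one, mul_zero]
  rw [Finset.sum_comm]
  simp_rw [Finset.sum_sub_distrib, sum_bernoulliWeight, sum_bernoulliWeight_disjoint]
  simp

theorem exists_card_add_card_disjoint_le [DecidableEq α] (A : α → Finset α) {p : ℝ}
    (hp0 : 0 ≤ p) (hp1 : p ≤ 1) :
    ∃ s : Finset α, (s.card : ℝ) + (univ.filter fun i => Disjoint s (A i)).card ≤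
      Fintype.card α * p + ∑ i, (1 - p) ^ (A i).card := by
  obtain ⟨s, -, hs⟩ := Finset.exists_le_sum_mul_of_sum_eq_one
    (X := fun s : Finset α => (s.card : ℝ) + (univ.filter fun i => Disjoint s (A i)).card)
    (fun s _ => bernoulliWeight_nonneg hp0 hp1 s) (sum_bernoulliWeight p)
  refine ⟨s, hs.trans_eq ?_⟩
  have hmissed : ∀ t : Finset α, ((univ.filter fun i => Disjoint t (A i)).card : ℝ) =
      ∑ i, if Disjoint t (A i) then 1 else 0 := by
    intro t
    simp [Finset.sum_boole]
  simp_rw [mul_add, Finset.sum_add_distrib, sum_bernoulliWeight_mul_card, hmissed,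
    Finset.mul_sum, mul_ite, mul_one, mul_zero]
  rw [Finset.sum_comm]
  simp_rw [sum_bernoulliWeight_disjoint]

end Averaging

section HopDomination

variable (G : SimpleGraph (Fin n))

theorem mem_ZSet_iff_disjoint {X : Finset (Fin n)} {i : Fin n} :
    i ∈ ZSet G X ↔ Disjoint X (insert i (N2 G i)) := by
  rw [Finset.disjoint_insert_right, Finset.disjoint_iff_inter_eq_empty, Finset.inter_comm]
  simp [ZSet]

theorem isHopDomSet_union_ZSet (X : Finset (Fin n)) : IsHopDomSet G (X ∪ ZSet G X) := by
  intro u hu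
  rw [Finset.mem_union, not_or, mem_ZSet_iff_disjoint, Finset.disjoint_insert_right,
    not_and_or, not_not, or_iff_right (by simpa using hu.1), Finset.not_disjoint_iff] at hu
  obtain ⟨v, hvX, hv⟩ := hu.2
  exact ⟨v, Finset.mem_union_left _ hvX, by simpa [N2] using hv⟩

theorem IsHopDomSet.mono {S T : Finset (Fin n)} (hS : IsHopDomSet G S) (hST : S ⊆ T) :
    IsHopDomSet G T := fun u hu => by
  obtain ⟨v, hv, huv⟩ := hS u fun h => hu (hST h)
  exact ⟨v, hST hv, huv⟩

theorem rhDomNum_le_two_mul_card {M : G.Subgraph} (hM : M.IsPerfectMatching)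
    {S : Finset (Fin n)} (hS : IsHopDomSet G S) : rhDomNum G ≤ 2 * S.card := by
  choose m hm using SimpleGraph.Subgraph.isPerfectMatching_iff.1 hM
  have hmm : ∀ v, m (m v) = v := fun v => ((hm (m v)).2 v (hm v).1.symm).symm
  have hrestrained : IsRestrainedHopDomSet G (S ∪ S.image m) := by
    refine ⟨hS.mono G Finset.subset_union_left,
      fun u hu => ⟨m u, fun hmu => hu ?_, (hm u).1.adj_sub⟩⟩
    rcases Finset.mem_union.1 hmu with hmu | hmu
    · exact Finset.mem_union_right _ (Finset.mem_image.2 ⟨m u, hmu, hmm u⟩)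
    · obtain ⟨x, hx, hxu⟩ := Finset.mem_image.1 hmu
      rw [← hmm x, hxu, hmm] at hx
      exact Finset.mem_union_left _ hx
  calc rhDomNum G ≤ (S ∪ S.image m).card := Nat.sInf_le ⟨_, hrestrained, rfl⟩
    _ ≤ S.card + (S.image m).card := Finset.card_union_le _ _
    _ ≤ 2 * S.card := by linarith [S.card_image_le (f := m)]

theorem exists_card_add_card_ZSet_le {p : ℝ} (hp0 : 0 ≤ p) (hp1 : p ≤ 1) :
    ∃ X : Finset (Fin n), (X.card : ℝ) + (ZSet G X).card ≤
      n * p + n * (1 - p) ^ (minHopDeg G + 1) := by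
  obtain ⟨X, hX⟩ := exists_card_add_card_disjoint_le (fun i => insert i (N2 G i)) hp0 hp1
  have hZ : ZSet G X = univ.filter fun i => Disjoint X (insert i (N2 G i)) := by
    ext i
    simp [mem_ZSet_iff_disjoint]
  have hmissed : ∀ i, (1 - p) ^ (insert i (N2 G i)).card ≤ (1 - p) ^ (minHopDeg G + 1) := by
    intro i
    have hmin : minHopDeg G ≤ hopDeg G i := ciInf_le (OrderBot.bddBelow _) i
    have hi : i ∉ N2 G i := by simp [N2]
    rw [Finset.card_insert_of_notMem hi]
    exact pow_le_pow_of_le_one (by linarith) (by linarith) (by simpa [hopDeg] using hmin)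
  refine ⟨X, ?_⟩
  rw [hZ]
  refine hX.trans ?_
  simpa using Finset.sum_le_sum fun i (_ : i ∈ univ) => hmissed i

end HopDomination

theorem Real.log_div_self_le_one {x : ℝ} (hx : 0 < x) : Real.log x / x ≤ 1 :=
  (div_le_one hx).2 (Real.log_le_self hx.le)

theorem one_sub_log_div_pow_le_inv {k : ℕ} (hk : 0 < k) :
    (1 - Real.log k / k) ^ k ≤ (k : ℝ)⁻¹ := by
  have hk' : (0 : ℝ) < k := by exact_mod_cast hk
  have hp1 := Real.log_div_self_le_one hk'
  calc (1 - Real.log k / k) ^ k ≤ Real.exp (-(Real.log k / k)) ^ k :=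
        pow_le_pow_left₀ (by linarith) (by linarith [Real.add_one_le_exp (-(Real.log k / k))]) _
    _ = (k : ℝ)⁻¹ := by
        rw [← Real.exp_nat_mul, mul_neg, mul_div_cancel₀ _ hk'.ne', Real.exp_neg,
          Real.exp_log hk']

theorem stmt5_general {n : ℕ} (G : SimpleGraph (Fin n))
    (hpm : ∃ M : SimpleGraph.Subgraph G, M.IsPerfectMatching) :
    (rhDomNum G : ℝ) ≤
      2 * n * (Real.log (minHopDeg G + 1) + 1) / (minHopDeg G + 1) := by
  obtain ⟨M, hM⟩ := hpm
  set k := minHopDeg G + 1 with hk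
  have hk0 : (0 : ℝ) < k := by positivity
  set p := Real.log k / k
  have hp0 : 0 ≤ p := div_nonneg (Real.log_natCast_nonneg k) hk0.le
  obtain ⟨X, hX⟩ := exists_card_add_card_ZSet_le G hp0 (Real.log_div_self_le_one hk0)
  rw [← hk] at hX
  have hbalance : (n : ℝ) * (1 - p) ^ k ≤ n * (k : ℝ)⁻¹ := by
    gcongr
    exact one_sub_log_div_pow_le_inv (by omega)
  have hcard := rhDomNum_le_two_mul_card G hM (isHopDomSet_union_ZSet G X)
  have hunion := Finset.card_union_le X (ZSet G X)
  calc (rhDomNum G : ℝ) ≤ 2 * ((X.card : ℝ) + (ZSet G X).card) := by exact_mod_cast by omega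
    _ ≤ 2 * (n * p + n * (k : ℝ)⁻¹) := by linarith
    _ = 2 * n * (Real.log k + 1) / k := by
        simp only [p]
        field_simp
    _ = 2 * n * (Real.log (minHopDeg G + 1) + 1) / (minHopDeg G + 1) := by push_cast [hk]; rfl

theorem stmt5 {n : ℕ} (G : SimpleGraph (Fin n)) (hδh : 1 ≤ minHopDeg G)
    (hpm : ∃ M : SimpleGraph.Subgraph G, M.IsPerfectMatching)
    (hν : hopDomNum G ≤ matchingNum G) :
    (rhDomNum G : ℝ) ≤
      2 * n * (Real.log (minHopDeg G + 1) + 1) / (minHopDeg G + 1) :=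
  stmt5_general G hpm
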